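/- There exist p.f.d. rectangle decomposable ℝ²-persistence modules M and N with d_I(M,N) = 1 and d_B(M,N) = 3; in particular the bound d_B ≤ (2n−1)d_I for rectangle decomposable ℝ^n-modules is tight for n = 2. Concretely, B(M) = {(0,10)×(1,11), (0,12)×(−1,11), (2,10)×(1,9)} and B(N) = {(1,11)×(0,10), (1,9)×(0,12), (−1,11)×(2,10)} give 1-interleaved modules admitting no ε-matching for ε < 3. -/

import Mathlib

open CategoryTheory Classical

noncomputable section

/-- Convexity of a subset of a poset. -/
def IsConvex {P : Type} [Preorder P] (I : Set P) : Prop :=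
  ∀ ⦃p q r : P⦄, p ∈ I → q ∈ I → p ≤ r → r ≤ q → r ∈ I

/-- Zigzag connectivity within a subset. -/
def ZigzagConnected {P : Type} [Preorder P] (I : Set P) : Prop :=
  ∀ p ∈ I, ∀ q ∈ I,
    Relation.ReflTransGen (fun a b => a ∈ I ∧ b ∈ I ∧ (a ≤ b ∨ b ≤ a)) p q

/-- An interval in a poset: nonempty, convex, and zigzag connected. -/
def IsIntervalSet {P : Type} [Preorder P] (I : Set P) : Prop :=
  I.Nonempty ∧ IsConvex I ∧ ZigzagConnected I

open scoped Classical in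
/-- The pointwise vector space of the interval module: `k` (as `⊤`) on `I`, `0` off `I`. -/
def objSub (k : Type) [Field k] {P : Type} [Preorder P] (I : Set P) (p : P) : Submodule k k :=
  if p ∈ I then ⊤ else ⊥

open scoped Classical in
/-- The interval persistence module `𝕀^I` as a functor `P ⥤ ModuleCat k`. -/
def intervalModule (k : Type) [Field k] {P : Type} [Preorder P] (I : Set P)
    (hI : IsConvex I) : P ⥤ ModuleCat.{0} k where
  obj p := ModuleCat.of k (objSub k I p)
  map {p q} h :=
    if hpq : p ∈ I ∧ q ∈ I then
      ModuleCat.ofHom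
        { toFun := fun x => ⟨(x : k), by simp [objSub, hpq.2]⟩
          map_add' := by intros; rfl
          map_smul' := by intros; rfl }
    else 0
  map_id := by
    intro p
    try dsimp only
    by_cases hp : p ∈ I
    · rw [dif_pos ⟨hp, hp⟩]; rfl
    · rw [dif_neg (fun h => hp h.1)]
      haveI : Subsingleton ↥(objSub k I p) := by
        rw [objSub, if_neg hp]; infer_instance
      apply ModuleCat.hom_ext; apply LinearMap.ext; intro x
      exact this.allEq _ _
  map_comp := by
    intro p q r hpq hqr
    try dsimp only
    by_cases hpr : p ∈ I ∧ r ∈ I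
    · have hq : q ∈ I := hI hpr.1 hpr.2 (leOfHom hpq) (leOfHom hqr)
      rw [dif_pos hpr, dif_pos ⟨hpr.1, hq⟩, dif_pos ⟨hq, hpr.2⟩]
      rfl
    · rw [dif_neg hpr]
      by_cases hp : p ∈ I
      · have hr : r ∉ I := fun hr => hpr ⟨hp, hr⟩
        haveI : Subsingleton ↥(objSub k I r) := by
          rw [objSub, if_neg hr]; infer_instance
        apply ModuleCat.hom_ext; apply LinearMap.ext; intro x
        exact this.allEq _ _
      · haveI : Subsingleton ↥(objSub k I p) := by
          rw [objSub, if_neg hp]; infer_instance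
        apply ModuleCat.hom_ext; apply LinearMap.ext; intro x
        have hx : x = 0 := this.allEq x 0
        rw [hx]
        simp

open DirectSum

open scoped ENNReal

/-- Direct sum of a family of persistence modules. -/
def dsumF (k : Type) [Field k] {P : Type} [Preorder P] {ι : Type}
    (F : ι → P ⥤ ModuleCat.{0} k) : P ⥤ ModuleCat.{0} k where
  obj p := ModuleCat.of k (⨁ i, ((F i).obj p : Type))
  map {p q} h := ModuleCat.ofHom
    (DFinsupp.mapRange.linearMap (fun i => ((F i).map h).hom))
  map_id := by
    intro p
    try dsimp only
    simp only [CategoryTheory.Functor.map_id]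
    apply ModuleCat.hom_ext; apply LinearMap.ext; intro x
    apply DFinsupp.ext; intro i
    rfl
  map_comp := by
    intro p q r hpq hqr
    try dsimp only
    simp only [CategoryTheory.Functor.map_comp]
    apply ModuleCat.hom_ext; apply LinearMap.ext; intro x
    apply DFinsupp.ext; intro i
    rfl

/-- Use the preorder category structure on `Fin n → ℝ`. -/
instance RnCat (n : ℕ) : Category (Fin n → ℝ) := Preorder.smallCategory _

/-- Diagonal translation by `ε` as an endofunctor of the poset `Fin n → ℝ`. -/
def transl (n : ℕ) (ε : ℝ) : (Fin n → ℝ) ⥤ (Fin n → ℝ) :=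
  Monotone.functor (f := fun p i => p i + ε)
    (fun _ _ hab i => by show _ + ε ≤ _ + ε; linarith [hab i])

/-- `M` and `N` are `ε`-interleaved `ℝⁿ`-persistence modules. -/
def Interleaved (k : Type) [Field k] {n : ℕ} (ε : ℝ)
    (M N : (Fin n → ℝ) ⥤ ModuleCat.{0} k) : Prop :=
  ∃ _hε : 0 ≤ ε, ∃ (f : M ⟶ transl n ε ⋙ N) (g : N ⟶ transl n ε ⋙ M),
    (∀ p : Fin n → ℝ, f.app p ≫ g.app (fun i => p i + ε) =
      M.map (homOfLE (show p ≤ fun i => p i + ε + ε from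
        fun i => by show p i ≤ p i + ε + ε; linarith))) ∧
    (∀ p : Fin n → ℝ, g.app p ≫ f.app (fun i => p i + ε) =
      N.map (homOfLE (show p ≤ fun i => p i + ε + ε from
        fun i => by show p i ≤ p i + ε + ε; linarith)))

/-- An interval `I ⊆ ℝⁿ` is `δ`-trivial: it contains no pair `p ≤ p + δ`. -/
def SetTrivial {n : ℕ} (δ : ℝ) (I : Set (Fin n → ℝ)) : Prop :=
  ¬ ∃ p, p ∈ I ∧ (fun i => p i + δ) ∈ I

/-- Barcode data: an indexed family of nonempty convex intervals in `ℝⁿ`. -/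
structure Barcode (n : ℕ) where
  ι : Type
  I : ι → Set (Fin n → ℝ)
  nonempty : ∀ i, (I i).Nonempty
  conv : ∀ i, IsConvex (I i)

/-- The interval decomposable module associated to barcode data. -/
def Barcode.module (k : Type) [Field k] {n : ℕ} (B : Barcode n) :
    (Fin n → ℝ) ⥤ ModuleCat.{0} k :=
  dsumF k fun i => intervalModule k (B.I i) (B.conv i)

/-- `B` is pointwise finite dimensional. -/
def Barcode.pfd (k : Type) [Field k] {n : ℕ} (B : Barcode n) : Prop :=
  ∀ p : Fin n → ℝ, Module.Finite k ((B.module k).obj p)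

/-- An `ε`-matching between two barcodes: a partial bijection such that unmatched
intervals are `2ε`-trivial and matched intervals are `ε`-interleaved. -/
def Matched (k : Type) [Field k] {n : ℕ} (ε : ℝ) (B C : Barcode n) : Prop :=
  0 ≤ ε ∧ ∃ (A : Set B.ι) (A' : Set C.ι) (e : A ≃ A'),
    (∀ i ∉ A, SetTrivial (2 * ε) (B.I i)) ∧
    (∀ j ∉ A', SetTrivial (2 * ε) (C.I j)) ∧
    (∀ i : A, Interleaved k ε
      (intervalModule k (B.I i) (B.conv i))
      (intervalModule k (C.I (e i)) (C.conv (e i))))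

/-- The interleaving distance, valued in `ℝ≥0∞`. -/
def dInt (k : Type) [Field k] {n : ℕ} (M N : (Fin n → ℝ) ⥤ ModuleCat.{0} k) : ℝ≥0∞ :=
  ⨅ (ε : ℝ) (_ : Interleaved k ε M N), ENNReal.ofReal ε

/-- The bottleneck distance between barcodes, valued in `ℝ≥0∞`. -/
def dBot (k : Type) [Field k] {n : ℕ} (B C : Barcode n) : ℝ≥0∞ :=
  ⨅ (ε : ℝ) (_ : Matched k ε B C), ENNReal.ofReal ε

/-- Rectangles: products of real intervals. -/
def rectSet {n : ℕ} (R : Fin n → Set ℝ) : Set (Fin n → ℝ) := {x | ∀ i, x i ∈ R i}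

theorem rectSet_convex {n : ℕ} (R : Fin n → Set ℝ) (h : ∀ i, (R i).OrdConnected) :
    IsConvex (rectSet R) := by
  intro p q r hp hq hpr hrq i
  exact (h i).out (hp i) (hq i) ⟨hpr i, hrq i⟩

/-- A barcode consists of rectangles. -/
def IsRectBarcode {n : ℕ} (B : Barcode n) : Prop :=
  ∀ i, ∃ R : Fin n → Set ℝ,
    (∀ j, (R j).Nonempty ∧ (R j).OrdConnected) ∧ B.I i = rectSet R

/-- The open rectangle `(a,b) × (c,d) ⊆ ℝ²`. -/
def rect2 (a b c d : ℝ) : Set (Fin 2 → ℝ) := rectSet ![Set.Ioo a b, Set.Ioo c d]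

theorem rect2_conv (a b c d : ℝ) : IsConvex (rect2 a b c d) := by
  apply rectSet_convex
  intro j
  fin_cases j
  · simpa using Set.ordConnected_Ioo
  · simpa using Set.ordConnected_Ioo

theorem rect2_nonempty {a b c d : ℝ} (h1 : a < b) (h2 : c < d) :
    (rect2 a b c d).Nonempty := by
  refine ⟨![(a + b) / 2, (c + d) / 2], fun i => ?_⟩
  fin_cases i
  · simp only [rect2, rectSet]
    constructor <;> (simp; linarith)
  · simp only [rect2, rectSet]
    constructor <;> (simp; linarith)

/-- The barcode `{(0,10)×(1,11), (0,12)×(−1,11), (2,10)×(1,9)}`. -/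
def B16 : Barcode 2 where
  ι := Fin 3
  I := ![rect2 0 10 1 11, rect2 0 12 (-1) 11, rect2 2 10 1 9]
  nonempty := by
    intro i
    fin_cases i
    · exact rect2_nonempty (by norm_num) (by norm_num)
    · exact rect2_nonempty (by norm_num) (by norm_num)
    · exact rect2_nonempty (by norm_num) (by norm_num)
  conv := by
    intro i
    fin_cases i
    · exact rect2_conv _ _ _ _
    · exact rect2_conv _ _ _ _
    · exact rect2_conv _ _ _ _

/-- The barcode `{(1,11)×(0,10), (1,9)×(0,12), (−1,11)×(2,10)}`. -/
def N16 : Barcode 2 where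
  ι := Fin 3
  I := ![rect2 1 11 0 10, rect2 1 9 0 12, rect2 (-1) 11 2 10]
  nonempty := by
    intro i
    fin_cases i
    · exact rect2_nonempty (by norm_num) (by norm_num)
    · exact rect2_nonempty (by norm_num) (by norm_num)
    · exact rect2_nonempty (by norm_num) (by norm_num)
  conv := by
    intro i
    fin_cases i
    · exact rect2_conv _ _ _ _
    · exact rect2_conv _ _ _ _
    · exact rect2_conv _ _ _ _

/-!
The matrices `f` and `g` are mutually inverse, and each nonzero entry `w(I, J)` joins open
rectangles whose corners satisfy `lo J ≤ lo I + 1` and `hi J ≤ hi I + 1`. For boxes this is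
exactly what makes multiplication by `w(I, J)` a morphism `𝕀^I → 𝕀^J(1)`, and it gives
`p + 1 ∈ J` whenever `p ∈ I`, `p + 2 ∈ I'` and `w(I, J) w(J, I') ≠ 0`. Hence the composites
`g(1) ∘ f` and `f(1) ∘ g` are computed by the matrix products `f g = 1` and `g f = 1`, i.e. they
are the structure maps. For `ε < 1`, the point `p = (10 - ε, 10.5 - 1.5ε)` has `p` and `p + 2ε`
in `(0,12) × (-1,11)` but `p + ε` in no rectangle of `B(N)`, so the structure map
`M_p → M_{p+2ε}` cannot factor through `N_{p+ε} = 0`.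

Every rectangle is wider than `6`, so for `ε < 3` an `ε`-matching leaves nothing unmatched. In
each pair formed by `(0,12) × (-1,11)` or `(2,10) × (1,9)` with `(1,9) × (0,12)` or
`(-1,11) × (2,10)`, one rectangle sticks out of the other by `3` on some side, so both
`(0,12) × (-1,11)` and `(2,10) × (1,9)` would have to be matched with `(1,11) × (0,10)`.
Matching the rectangles in the listed order is a `3`-matching.
-/

section ScalarMaps

variable {k : Type} [Field k] {P : Type} [Preorder P]

lemma mem_objSub {I : Set P} {p : P} {x : k} : x ∈ objSub k I p ↔ p ∈ I ∨ x = 0 := by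
  unfold objSub
  split_ifs with hp
  · simp [hp]
  · rw [Submodule.mem_bot]; simp [hp]

lemma coe_eq_zero_of_notMem {I : Set P} {p : P} (hp : p ∉ I) (x : objSub k I p) :
    (x : k) = 0 :=
  (mem_objSub.1 x.2).resolve_left hp

lemma subsingleton_objSub {I : Set P} {p : P} (hp : p ∉ I) : Subsingleton (objSub k I p) :=
  ⟨fun x y => Subtype.ext <| by rw [coe_eq_zero_of_notMem hp, coe_eq_zero_of_notMem hp]⟩

def scalarMap (c : k) (I K : Set P) (p r : P) : objSub k I p →ₗ[k] objSub k K r :=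
  LinearMap.codRestrict _ ((if r ∈ K then c else 0) • (objSub k I p).subtype) fun x => by
    by_cases hr : r ∈ K <;> simp [mem_objSub, hr]

@[simp]
lemma coe_scalarMap (c : k) (I K : Set P) (p r : P) (x : objSub k I p) :
    (scalarMap c I K p r x : k) = if r ∈ K then c * x else 0 := by
  by_cases hr : r ∈ K <;> simp [scalarMap, hr]

@[simp]
lemma scalarMap_zero (I K : Set P) (p r : P) : scalarMap (0 : k) I K p r = 0 := by
  ext x
  simp

lemma sum_scalarMap {ι : Type} (s : Finset ι) (c : ι → k) (I K : Set P) (p r : P) :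
    ∑ i ∈ s, scalarMap (c i) I K p r = scalarMap (∑ i ∈ s, c i) I K p r := by
  ext x
  by_cases hr : r ∈ K <;> simp [hr, Finset.sum_mul]

lemma scalarMap_comp_scalarMap {c c' : k} {I J K : Set P} {p q r : P}
    (hJ : c * c' ≠ 0 → p ∈ I → r ∈ K → q ∈ J) :
    scalarMap c' J K q r ∘ₗ scalarMap c I J p q = scalarMap (c * c') I K p r := by
  ext x
  simp only [LinearMap.comp_apply, coe_scalarMap]
  by_cases hr : r ∈ K
  · by_cases hq : q ∈ J
    · simp only [if_pos hr, if_pos hq]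
      ring
    · have hx : c * c' * x = 0 := by
        by_cases hp : p ∈ I
        · by_contra hne
          exact hq (hJ (left_ne_zero_of_mul hne) hp hr)
        · simp [coe_eq_zero_of_notMem hp]
      simp [hr, hq, hx]
  · simp [hr]

lemma intervalModule_map (I : Set P) (hI : IsConvex I) {p q : P} (h : p ⟶ q) :
    (intervalModule k I hI).map h = ModuleCat.ofHom (scalarMap 1 I I p q) := by
  refine ModuleCat.hom_ext (LinearMap.ext fun (x : objSub k I p) => Subtype.ext ?_)
  dsimp only [intervalModule]
  erw [coe_scalarMap]
  by_cases hp : p ∈ I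
  · by_cases hq : q ∈ I
    · rw [dif_pos ⟨hp, hq⟩, if_pos hq, one_mul]
      rfl
    · rw [dif_neg fun h => hq h.2, if_neg hq]
      rfl
  · rw [dif_neg fun h => hp h.1, coe_eq_zero_of_notMem hp, mul_zero, ite_self]
    rfl

lemma intervalModule_map_ne_zero {I : Set P} (hI : IsConvex I) {p q : P} (hp : p ∈ I)
    (hq : q ∈ I) (f : p ⟶ q) : (intervalModule k I hI).map f ≠ 0 := by
  rw [intervalModule_map]
  intro h0
  have := congrArg (fun φ : ModuleCat.of k (objSub k I p) ⟶ ModuleCat.of k (objSub k I q) =>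
    (φ.hom ⟨1, mem_objSub.2 (Or.inl hp)⟩ : k)) h0
  simp only [ModuleCat.hom_ofHom, coe_scalarMap, if_pos hq, one_mul] at this
  exact one_ne_zero this

end ScalarMaps

section DirectSums

variable {k : Type} [Field k] {P : Type} [Preorder P] {ι : Type}

lemma dsumF_map_hom (F : ι → P ⥤ ModuleCat.{0} k) {p q : P} (f : p ⟶ q) :
    ((dsumF k F).map f).hom = DFinsupp.mapRange.linearMap fun i => ((F i).map f).hom :=
  rfl

lemma subsingleton_dsumF_obj {F : ι → P ⥤ ModuleCat.{0} k} {p : P}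
    (h : ∀ i, Subsingleton ((F i).obj p)) : Subsingleton ((dsumF k F).obj p) :=
  ⟨fun _ _ => DFinsupp.ext fun i => (h i).elim _ _⟩

lemma dsumF_map_ne_zero {F : ι → P ⥤ ModuleCat.{0} k} {p q : P} {f : p ⟶ q} (i : ι)
    (h : (F i).map f ≠ 0) : (dsumF k F).map f ≠ 0 := by
  intro h0
  apply h
  ext x
  have := DFunLike.congr_fun (congrArg ModuleCat.Hom.hom h0) (DirectSum.lof k ι _ i x)
  change DFinsupp.mapRange.linearMap (fun i => ((F i).map f).hom)
    (DirectSum.lof k ι (fun i => (F i).obj p) i x) = 0 at this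
  simpa [← DirectSum.single_eq_lof] using DFunLike.congr_fun this i

lemma dsumF_intervalModule_map {I : ι → Set P} (hI : ∀ i, IsConvex (I i)) {p q : P}
    (h : p ⟶ q) : (dsumF k fun i => intervalModule k (I i) (hI i)).map h =
      ModuleCat.ofHom (DFinsupp.mapRange.linearMap fun i => scalarMap 1 (I i) (I i) p q) := by
  rw [← ModuleCat.ofHom_hom ((dsumF k _).map h), dsumF_map_hom]
  congr
  funext i
  rw [intervalModule_map]
  rfl

end DirectSums

section Interleavings

variable {k : Type} [Field k] {n : ℕ}

lemma Interleaved.symm {ε : ℝ} {M N : (Fin n → ℝ) ⥤ ModuleCat.{0} k}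
    (h : Interleaved k ε M N) : Interleaved k ε N M :=
  let ⟨hε, f, g, hfg, hgf⟩ := h
  ⟨hε, g, f, hgf, hfg⟩

lemma not_interleaved_of_subsingleton {ε : ℝ} {M N : (Fin n → ℝ) ⥤ ModuleCat.{0} k}
    {p : Fin n → ℝ} (hN : Subsingleton (N.obj fun l => p l + ε))
    (hM : ∀ hle : p ≤ (fun l => p l + ε + ε), M.map (homOfLE hle) ≠ 0) :
    ¬ Interleaved k ε M N := by
  rintro ⟨_, f, g, hfg, -⟩
  have hf : f.app p = 0 := by
    ext x
    exact hN.elim _ _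
  exact hM _ (by rw [← hfg p, hf]; exact Limits.zero_comp)

end Interleavings

section ShiftMorphisms

variable {k : Type} [Field k] {n : ℕ}

/-- The condition under which multiplication by a nonzero scalar is a morphism
`𝕀^I → 𝕀^J(ε)`. -/
def ShiftCompatible (ε : ℝ) (I J : Set (Fin n → ℝ)) : Prop :=
  ∀ ⦃p q : Fin n → ℝ⦄, p ≤ q → p ∈ I → (fun l => q l + ε) ∈ J →
    q ∈ I ∧ (fun l => p l + ε) ∈ J

lemma scalarMap_shift_naturality {ε : ℝ} {I J : Set (Fin n → ℝ)} {c : k}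
    (hc : c ≠ 0 → ShiftCompatible ε I J) {p q : Fin n → ℝ} (hpq : p ≤ q) :
    scalarMap c I J q (fun l => q l + ε) ∘ₗ scalarMap 1 I I p q =
      scalarMap 1 J J (fun l => p l + ε) (fun l => q l + ε) ∘ₗ
        scalarMap c I J p (fun l => p l + ε) := by
  rw [scalarMap_comp_scalarMap, scalarMap_comp_scalarMap, one_mul, mul_one]
  · exact fun h hp hq => (hc (by simpa using h) hpq hp hq).2
  · exact fun h hp hq => (hc (by simpa using h) hpq hp hq).1

def shiftHom {ε : ℝ} {I J : Set (Fin n → ℝ)} (hI : IsConvex I) (hJ : IsConvex J)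
    (hIJ : ShiftCompatible ε I J) : intervalModule k I hI ⟶ transl n ε ⋙ intervalModule k J hJ where
  app p := ModuleCat.ofHom (scalarMap 1 I J p fun l => p l + ε)
  naturality p q h := by
    rw [Functor.comp_map, intervalModule_map, intervalModule_map]
    exact ModuleCat.hom_ext (scalarMap_shift_naturality (fun _ => hIJ) (leOfHom h))

lemma shiftHom_app_comp_shiftHom_app {ε : ℝ} {I J : Set (Fin n → ℝ)} (hI : IsConvex I)
    (hJ : IsConvex J) (hIJ : ShiftCompatible ε I J) (hJI : ShiftCompatible ε J I)
    (hIJI : ∀ p, p ∈ I → (fun l => p l + ε + ε) ∈ I → (fun l => p l + ε) ∈ J)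
    (p : Fin n → ℝ) (hle : p ≤ fun l => p l + ε + ε) :
    (shiftHom (k := k) hI hJ hIJ).app p ≫ (shiftHom hJ hI hJI).app (fun l => p l + ε) =
      (intervalModule k I hI).map (homOfLE hle) := by
  rw [intervalModule_map]
  exact ModuleCat.hom_ext ((scalarMap_comp_scalarMap fun _ => hIJI p).trans (by rw [one_mul]; rfl))

theorem interleaved_intervalModule {ε : ℝ} (hε : 0 ≤ ε) {I J : Set (Fin n → ℝ)}
    (hI : IsConvex I) (hJ : IsConvex J) (hIJ : ShiftCompatible ε I J)
    (hJI : ShiftCompatible ε J I)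
    (hIJI : ∀ p, p ∈ I → (fun l => p l + ε + ε) ∈ I → (fun l => p l + ε) ∈ J)
    (hJIJ : ∀ p, p ∈ J → (fun l => p l + ε + ε) ∈ J → (fun l => p l + ε) ∈ I) :
    Interleaved k ε (intervalModule k I hI) (intervalModule k J hJ) :=
  ⟨hε, shiftHom hI hJ hIJ, shiftHom hJ hI hJI,
    fun p => shiftHom_app_comp_shiftHom_app hI hJ hIJ hJI hIJI p _,
    fun p => shiftHom_app_comp_shiftHom_app hJ hI hJI hIJ hJIJ p _⟩

end ShiftMorphisms

section MatrixMorphisms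

variable {k : Type} [Field k] {P : Type} [Preorder P] {ι κ : Type} [Fintype ι] [Fintype κ]

def matrixMap (W : Matrix ι κ k) (I : ι → Set P) (J : κ → Set P) (p q : P) :
    (⨁ i, objSub k (I i) p) →ₗ[k] ⨁ j, objSub k (J j) q :=
  (DirectSum.linearEquivFunOnFintype k κ _).symm.toLinearMap ∘ₗ
    LinearMap.pi fun j => ∑ i, scalarMap (W i j) (I i) (J j) p q ∘ₗ DirectSum.component k ι _ i

@[simp]
lemma matrixMap_apply (W : Matrix ι κ k) (I : ι → Set P) (J : κ → Set P) (p q : P)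
    (z : ⨁ i, objSub k (I i) p) (j : κ) :
    matrixMap W I J p q z j = ∑ i, scalarMap (W i j) (I i) (J j) p q (z i) := by
  change (∑ i, scalarMap (W i j) (I i) (J j) p q ∘ₗ DirectSum.component k ι _ i) z = _
  simp only [LinearMap.sum_apply, LinearMap.comp_apply, ← DirectSum.apply_eq_component]

lemma matrixMap_comp_matrixMap [DecidableEq ι] {W : Matrix ι κ k} {W' : Matrix κ ι k}
    (hWW' : W * W' = 1) {I : ι → Set P} {J : κ → Set P} {p q r : P}
    (hJ : ∀ i j i', W i j * W' j i' ≠ 0 → p ∈ I i → r ∈ I i' → q ∈ J j) :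
    matrixMap W' J I q r ∘ₗ matrixMap W I J p q =
      DFinsupp.mapRange.linearMap fun i => scalarMap 1 (I i) (I i) p r := by
  refine LinearMap.ext fun z => DFinsupp.ext fun i' => ?_
  simp only [LinearMap.comp_apply, matrixMap_apply, map_sum]
  calc ∑ j, ∑ i, scalarMap (W' j i') (J j) (I i') q r (scalarMap (W i j) (I i) (J j) p q (z i))
      = ∑ i, scalarMap ((W * W') i i') (I i) (I i') p r (z i) := by
        rw [Finset.sum_comm]
        refine Finset.sum_congr rfl fun i _ => ?_
        simp only [Matrix.mul_apply, ← sum_scalarMap, LinearMap.sum_apply,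
          ← scalarMap_comp_scalarMap (hJ i _ i'), LinearMap.comp_apply]
    _ = scalarMap 1 (I i') (I i') p r (z i') := by
        rw [hWW', Fintype.sum_eq_single i' fun i hi => by simp [Matrix.one_apply_ne hi],
          Matrix.one_apply_eq]

end MatrixMorphisms

section MatrixInterleavings

variable {k : Type} [Field k] {n : ℕ} {ι κ : Type} [Fintype ι] [Fintype κ]

lemma matrixMap_shift_naturality {ε : ℝ} {I : ι → Set (Fin n → ℝ)} {J : κ → Set (Fin n → ℝ)}
    {W : Matrix ι κ k} (hW : ∀ i j, W i j ≠ 0 → ShiftCompatible ε (I i) (J j))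
    {p q : Fin n → ℝ} (hpq : p ≤ q) :
    matrixMap W I J q (fun l => q l + ε) ∘ₗ
        DFinsupp.mapRange.linearMap (fun i => scalarMap 1 (I i) (I i) p q) =
      DFinsupp.mapRange.linearMap
          (fun j => scalarMap 1 (J j) (J j) (fun l => p l + ε) (fun l => q l + ε)) ∘ₗ
        matrixMap W I J p (fun l => p l + ε) := by
  refine LinearMap.ext fun z => DFinsupp.ext fun j => ?_
  rw [LinearMap.comp_apply, LinearMap.comp_apply, matrixMap_apply]
  simp only [DFinsupp.mapRange.linearMap_apply, DFinsupp.mapRange_apply]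
  rw [matrixMap_apply, map_sum]
  exact Finset.sum_congr rfl fun i _ =>
    LinearMap.congr_fun (scalarMap_shift_naturality (hW i j) hpq) (z i)

def matrixHom {ε : ℝ} {I : ι → Set (Fin n → ℝ)} {J : κ → Set (Fin n → ℝ)}
    (hI : ∀ i, IsConvex (I i)) (hJ : ∀ j, IsConvex (J j)) (W : Matrix ι κ k)
    (hW : ∀ i j, W i j ≠ 0 → ShiftCompatible ε (I i) (J j)) :
    dsumF k (fun i => intervalModule k (I i) (hI i)) ⟶
      transl n ε ⋙ dsumF k fun j => intervalModule k (J j) (hJ j) where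
  app p := ModuleCat.ofHom (matrixMap W I J p fun l => p l + ε)
  naturality p q h := by
    rw [Functor.comp_map, dsumF_intervalModule_map, dsumF_intervalModule_map]
    exact ModuleCat.hom_ext (matrixMap_shift_naturality hW (leOfHom h))

lemma matrixHom_app_comp_matrixHom_app [DecidableEq ι] {ε : ℝ} {I : ι → Set (Fin n → ℝ)}
    {J : κ → Set (Fin n → ℝ)} (hI : ∀ i, IsConvex (I i)) (hJ : ∀ j, IsConvex (J j))
    {W : Matrix ι κ k} {W' : Matrix κ ι k}
    (hW : ∀ i j, W i j ≠ 0 → ShiftCompatible ε (I i) (J j))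
    (hW' : ∀ j i, W' j i ≠ 0 → ShiftCompatible ε (J j) (I i)) (hWW' : W * W' = 1)
    (p : Fin n → ℝ) (hIJI : ∀ i j i', W i j * W' j i' ≠ 0 → p ∈ I i →
      (fun l => p l + ε + ε) ∈ I i' → (fun l => p l + ε) ∈ J j)
    (hle : p ≤ fun l => p l + ε + ε) :
    (matrixHom hI hJ W hW).app p ≫ (matrixHom hJ hI W' hW').app (fun l => p l + ε) =
      (dsumF k fun i => intervalModule k (I i) (hI i)).map (homOfLE hle) := by
  rw [dsumF_intervalModule_map]
  exact ModuleCat.hom_ext (matrixMap_comp_matrixMap hWW' hIJI)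

theorem interleaved_dsumF_of_matrix [DecidableEq ι] [DecidableEq κ] {ε : ℝ} (hε : 0 ≤ ε)
    {I : ι → Set (Fin n → ℝ)} {J : κ → Set (Fin n → ℝ)} (hI : ∀ i, IsConvex (I i))
    (hJ : ∀ j, IsConvex (J j)) (W : Matrix ι κ k) (W' : Matrix κ ι k)
    (hW : ∀ i j, W i j ≠ 0 → ShiftCompatible ε (I i) (J j))
    (hW' : ∀ j i, W' j i ≠ 0 → ShiftCompatible ε (J j) (I i))
    (hWW' : W * W' = 1) (hW'W : W' * W = 1)
    (hIJI : ∀ p i j i', W i j * W' j i' ≠ 0 → p ∈ I i →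
      (fun l => p l + ε + ε) ∈ I i' → (fun l => p l + ε) ∈ J j)
    (hJIJ : ∀ p j i j', W' j i * W i j' ≠ 0 → p ∈ J j →
      (fun l => p l + ε + ε) ∈ J j' → (fun l => p l + ε) ∈ I i) :
    Interleaved k ε (dsumF k fun i => intervalModule k (I i) (hI i))
      (dsumF k fun j => intervalModule k (J j) (hJ j)) :=
  ⟨hε, matrixHom hI hJ W hW, matrixHom hJ hI W' hW',
    fun p => matrixHom_app_comp_matrixHom_app hI hJ hW hW' hWW' p (hIJI p) _,
    fun p => matrixHom_app_comp_matrixHom_app hJ hI hW' hW hW'W p (hJIJ p) _⟩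

end MatrixInterleavings

section Boxes

variable {n : ℕ}

def box (lo hi : Fin n → ℝ) : Set (Fin n → ℝ) := rectSet fun l => Set.Ioo (lo l) (hi l)

lemma mem_box {lo hi p : Fin n → ℝ} : p ∈ box lo hi ↔ ∀ l, lo l < p l ∧ p l < hi l :=
  Iff.rfl

lemma rect2_eq_box (a b c d : ℝ) : rect2 a b c d = box ![a, c] ![b, d] := by
  ext p
  simp [rect2, box, rectSet, Fin.forall_fin_two]

lemma isRectBarcode_of_box {B : Barcode n} {lo hi : B.ι → Fin n → ℝ}
    (hB : ∀ i, B.I i = box (lo i) (hi i)) (hlt : ∀ i l, lo i l < hi i l) : IsRectBarcode B :=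
  fun i => ⟨fun l => Set.Ioo (lo i l) (hi i l),
    fun l => ⟨Set.nonempty_Ioo.2 (hlt i l), Set.ordConnected_Ioo⟩, hB i⟩

lemma not_setTrivial_box {δ : ℝ} (hδ : 0 ≤ δ) {lo hi : Fin n → ℝ} (h : ∀ l, δ < hi l - lo l) :
    ¬ SetTrivial δ (box lo hi) := fun ht =>
  ht ⟨fun l => (lo l + hi l - δ) / 2, fun l => ⟨by linarith [h l], by linarith [h l]⟩,
    fun l => ⟨by dsimp only; linarith [h l], by dsimp only; linarith [h l]⟩⟩

def BoxShiftLE (ε : ℝ) (lo hi lo' hi' : Fin n → ℝ) : Prop :=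
  ∀ l, lo' l ≤ lo l + ε ∧ hi' l ≤ hi l + ε

lemma BoxShiftLE.shiftCompatible {ε : ℝ} {lo hi lo' hi' : Fin n → ℝ}
    (h : BoxShiftLE ε lo hi lo' hi') : ShiftCompatible ε (box lo hi) (box lo' hi') := by
  intro p q hpq hp hq
  simp only [mem_box] at hp hq ⊢
  refine ⟨fun l => ?_, fun l => ?_⟩ <;>
  · obtain ⟨hp₁, hp₂⟩ := hp l
    obtain ⟨hq₁, hq₂⟩ := hq l
    obtain ⟨h₁, h₂⟩ := h l
    have := hpq l
    constructor <;> linarith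

lemma BoxShiftLE.add_mem_box {ε : ℝ} {lo hi lo' hi' lo'' hi'' p : Fin n → ℝ}
    (h : BoxShiftLE ε lo hi lo' hi') (h' : BoxShiftLE ε lo' hi' lo'' hi'') (hp : p ∈ box lo hi)
    (hp' : (fun l => p l + ε + ε) ∈ box lo'' hi'') : (fun l => p l + ε) ∈ box lo' hi' := by
  simp only [mem_box] at hp hp' ⊢
  intro l
  obtain ⟨hp₁, -⟩ := hp l
  obtain ⟨-, hp'₂⟩ := hp' l
  obtain ⟨h₁, -⟩ := h l
  obtain ⟨-, h'₂⟩ := h' l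
  constructor <;> linarith

end Boxes

section BoxInterleavings

variable {k : Type} [Field k] {n : ℕ}

theorem interleaved_box {ε : ℝ} (hε : 0 ≤ ε) {lo hi lo' hi' : Fin n → ℝ}
    (h : BoxShiftLE ε lo hi lo' hi') (h' : BoxShiftLE ε lo' hi' lo hi) {I J : Set (Fin n → ℝ)}
    (hI : IsConvex I) (hJ : IsConvex J) (hIbox : I = box lo hi) (hJbox : J = box lo' hi') :
    Interleaved k ε (intervalModule k I hI) (intervalModule k J hJ) := by
  subst hIbox hJbox
  exact interleaved_intervalModule hε hI hJ h.shiftCompatible h'.shiftCompatible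
    (fun _ => h.add_mem_box h') (fun _ => h'.add_mem_box h)

theorem interleaved_dsumF_box_of_matrix {ι κ : Type} [Fintype ι] [Fintype κ] [DecidableEq ι]
    [DecidableEq κ] {ε : ℝ} (hε : 0 ≤ ε) {I : ι → Set (Fin n → ℝ)} {J : κ → Set (Fin n → ℝ)}
    (hI : ∀ i, IsConvex (I i)) (hJ : ∀ j, IsConvex (J j)) {lo hi : ι → Fin n → ℝ}
    {lo' hi' : κ → Fin n → ℝ} (hIbox : ∀ i, I i = box (lo i) (hi i))
    (hJbox : ∀ j, J j = box (lo' j) (hi' j)) (W : Matrix ι κ k) (W' : Matrix κ ι k)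
    (hW : ∀ i j, W i j ≠ 0 → BoxShiftLE ε (lo i) (hi i) (lo' j) (hi' j))
    (hW' : ∀ j i, W' j i ≠ 0 → BoxShiftLE ε (lo' j) (hi' j) (lo i) (hi i))
    (hWW' : W * W' = 1) (hW'W : W' * W = 1) :
    Interleaved k ε (dsumF k fun i => intervalModule k (I i) (hI i))
      (dsumF k fun j => intervalModule k (J j) (hJ j)) := by
  obtain rfl : I = fun i => box (lo i) (hi i) := funext hIbox
  obtain rfl : J = fun j => box (lo' j) (hi' j) := funext hJbox
  exact interleaved_dsumF_of_matrix hε hI hJ W W'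
    (fun i j hij => (hW i j hij).shiftCompatible) (fun j i hji => (hW' j i hji).shiftCompatible)
    hWW' hW'W
    (fun _ i j i' h =>
      (hW i j (left_ne_zero_of_mul h)).add_mem_box (hW' j i' (right_ne_zero_of_mul h)))
    (fun _ j i j' h =>
      (hW' j i (left_ne_zero_of_mul h)).add_mem_box (hW i j' (right_ne_zero_of_mul h)))

/-- A point `p` of `box lo hi` close to its side `l` has `p + 2ε ∈ box lo hi` but
`p + ε ∉ box lo' hi'`. -/
theorem not_interleaved_box {ε : ℝ} {lo hi lo' hi' : Fin n → ℝ}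
    (hwide : ∀ m, 2 * ε < hi m - lo m) (l : Fin n) (hl : hi' l + ε < hi l ∨ lo l + ε < lo' l)
    {I J : Set (Fin n → ℝ)} (hI : IsConvex I) (hJ : IsConvex J) (hIbox : I = box lo hi)
    (hJbox : J = box lo' hi') :
    ¬ Interleaved k ε (intervalModule k I hI) (intervalModule k J hJ) := by
  subst hIbox hJbox
  intro hint
  have hε : 0 ≤ ε := hint.1
  set mid : Fin n → ℝ := fun m => (lo m + hi m) / 2 - ε
  have hmid : ∀ m, lo m < mid m ∧ mid m + ε + ε < hi m := fun m => by
    simp only [mid]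
    constructor <;> linarith [hwide m]
  obtain ⟨x, hx, hxout⟩ : ∃ x, (lo l < x ∧ x + ε + ε < hi l) ∧ x + ε ∉ Set.Ioo (lo' l) (hi' l) := by
    rcases hl with hl | hl
    · refine ⟨max (hi' l - ε) (mid l), ⟨?_, ?_⟩, fun hx => ?_⟩
      · exact lt_max_of_lt_right (hmid l).1
      · rcases max_cases (hi' l - ε) (mid l) with ⟨h, -⟩ | ⟨h, -⟩ <;> rw [h] <;> linarith [hmid l]
      · linarith [hx.2, le_max_left (hi' l - ε) (mid l)]
    · refine ⟨min (lo' l - ε) (mid l), ⟨?_, ?_⟩, fun hx => ?_⟩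
      · exact lt_min (by linarith) (hmid l).1
      · linarith [min_le_right (lo' l - ε) (mid l), hmid l]
      · linarith [hx.1, min_le_left (lo' l - ε) (mid l)]
  set p := Function.update mid l x
  have hp : ∀ m, lo m < p m ∧ p m + ε + ε < hi m := fun m => by
    rcases eq_or_ne m l with rfl | hm
    · simpa [p] using hx
    · simpa [p, hm] using hmid m
  refine not_interleaved_of_subsingleton (p := p) (subsingleton_objSub fun hq => hxout ?_)
    (fun hle => intervalModule_map_ne_zero _ (fun m => ⟨(hp m).1, by linarith [hp m]⟩)
      (fun m => ⟨by linarith [hp m], (hp m).2⟩) _) hint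
  simpa [p] using hq l

end BoxInterleavings

lemma iInf_ofReal_eq_of_isLeast {S : ℝ → Prop} {a : ℝ} (h : IsLeast {ε | S ε} a) :
    ⨅ (ε : ℝ) (_ : S ε), ENNReal.ofReal ε = ENNReal.ofReal a :=
  le_antisymm (iInf₂_le a h.1) (le_iInf₂ fun _ hε => ENNReal.ofReal_le_ofReal (h.2 hε))

section Barcodes

variable {k : Type} [Field k] {n : ℕ}

lemma Barcode.pfd_of_finite (B : Barcode n) [Finite B.ι] : B.pfd k := fun p =>
  have := Fintype.ofFinite B.ι
  Module.Finite.equiv (DirectSum.linearEquivFunOnFintype k B.ι fun i => objSub k (B.I i) p).symm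

lemma matched_of_equiv {ε : ℝ} (hε : 0 ≤ ε) {B C : Barcode n} (e : B.ι ≃ C.ι)
    (h : ∀ i, Interleaved k ε (intervalModule k (B.I i) (B.conv i))
      (intervalModule k (C.I (e i)) (C.conv (e i)))) : Matched k ε B C :=
  ⟨hε, Set.univ, Set.univ, (Equiv.Set.univ _).trans (e.trans (Equiv.Set.univ _).symm),
    fun i hi => absurd (Set.mem_univ i) hi, fun j hj => absurd (Set.mem_univ j) hj,
    fun i => h i⟩

lemma Matched.exists_injective {ε : ℝ} {B C : Barcode n} (h : Matched k ε B C)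
    (hB : ∀ i, ¬ SetTrivial (2 * ε) (B.I i)) :
    ∃ σ : B.ι → C.ι, Function.Injective σ ∧ ∀ i, Interleaved k ε
      (intervalModule k (B.I i) (B.conv i)) (intervalModule k (C.I (σ i)) (C.conv (σ i))) := by
  obtain ⟨_, A, _, e, hA, _, hint⟩ := h
  have hmem : ∀ i, i ∈ A := fun i => by_contra fun hi => hB i (hA i hi)
  refine ⟨fun i => e ⟨i, hmem i⟩, fun i j hij => ?_, fun i => hint ⟨i, hmem i⟩⟩
  simpa using e.injective (Subtype.ext hij)

end Barcodes

section Example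

def B16.lo : Fin 3 → Fin 2 → ℝ := ![![0, 1], ![0, -1], ![2, 1]]

def B16.hi : Fin 3 → Fin 2 → ℝ := ![![10, 11], ![12, 11], ![10, 9]]

def N16.lo : Fin 3 → Fin 2 → ℝ := ![![1, 0], ![1, 0], ![-1, 2]]

def N16.hi : Fin 3 → Fin 2 → ℝ := ![![11, 10], ![9, 12], ![11, 10]]

lemma B16.I_eq_box (i : Fin 3) : B16.I i = box (B16.lo i) (B16.hi i) := by
  fin_cases i <;> exact rect2_eq_box _ _ _ _

lemma N16.I_eq_box (j : Fin 3) : N16.I j = box (N16.lo j) (N16.hi j) := by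
  fin_cases j <;> exact rect2_eq_box _ _ _ _

lemma B16.isRectBarcode : IsRectBarcode B16 :=
  isRectBarcode_of_box B16.I_eq_box fun (i : Fin 3) l => by
    fin_cases i <;> fin_cases l <;> norm_num [B16.lo, B16.hi]

lemma N16.isRectBarcode : IsRectBarcode N16 :=
  isRectBarcode_of_box N16.I_eq_box fun (j : Fin 3) l => by
    fin_cases j <;> fin_cases l <;> norm_num [N16.lo, N16.hi]

instance : Finite B16.ι := inferInstanceAs (Finite (Fin 3))

instance : Finite N16.ι := inferInstanceAs (Finite (Fin 3))

variable {k : Type} [Field k]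

/-- The paper's interleaving morphisms `f : M → N(1)` and `g : N → M(1)`, with entries
`w(I_i, J_j)` and `w(J_j, I_i)`. -/
def matrixF (k : Type) [Field k] : Matrix (Fin 3) (Fin 3) k := !![1, 1, 1; 1, 1, 0; 1, 0, 1]

def matrixG (k : Type) [Field k] : Matrix (Fin 3) (Fin 3) k := !![-1, 1, 1; 1, 0, -1; 1, -1, 0]

lemma matrixF_mul_matrixG : matrixF k * matrixG k = 1 := by
  ext i j
  fin_cases i <;> fin_cases j <;> simp [matrixF, matrixG, Matrix.mul_apply, Fin.sum_univ_three]

theorem B16_N16_interleaved_one : Interleaved k 1 (B16.module k) (N16.module k) := by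
  refine interleaved_dsumF_box_of_matrix (ι := Fin 3) (κ := Fin 3) zero_le_one B16.conv N16.conv
    B16.I_eq_box N16.I_eq_box (matrixF k) (matrixG k) ?_ ?_ matrixF_mul_matrixG
    (mul_eq_one_comm.1 matrixF_mul_matrixG)
  · intro i j h l
    fin_cases i <;> fin_cases j <;> fin_cases l <;>
      simp [matrixF, B16.lo, B16.hi, N16.lo, N16.hi] at h ⊢ <;> norm_num
  · intro j i h l
    fin_cases i <;> fin_cases j <;> fin_cases l <;>
      simp [matrixG, B16.lo, B16.hi, N16.lo, N16.hi] at h ⊢ <;> norm_num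

theorem B16_N16_not_interleaved {ε : ℝ} (hε : ε < 1) :
    ¬ Interleaved k ε (B16.module k) (N16.module k) := by
  intro h
  have hε₀ : 0 ≤ ε := h.1
  refine not_interleaved_of_subsingleton (p := ![10 - ε, (21 - 3 * ε) / 2])
    (subsingleton_dsumF_obj fun (j : Fin 3) => subsingleton_objSub ?_)
    (fun _ => dsumF_map_ne_zero (1 : Fin 3) (intervalModule_map_ne_zero _ ?_ ?_ _)) h
  · rw [N16.I_eq_box, mem_box]
    fin_cases j <;> simp [N16.lo, N16.hi, Fin.forall_fin_two] <;> intros <;> linarith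
  all_goals
    rw [B16.I_eq_box, mem_box]
    simp [B16.lo, B16.hi, Fin.forall_fin_two]
    constructor <;> constructor <;> linarith

theorem B16_N16_not_matched {ε : ℝ} (hε : ε < 3) : ¬ Matched k ε B16 N16 := by
  intro h
  have hε₀ : 0 ≤ ε := h.1
  have hwideB : ∀ i m, 2 * ε < B16.hi i m - B16.lo i m := by
    intro i m
    fin_cases i <;> fin_cases m <;> norm_num [B16.lo, B16.hi] <;> linarith
  have hwideN : ∀ j m, 2 * ε < N16.hi j m - N16.lo j m := by
    intro j m
    fin_cases j <;> fin_cases m <;> norm_num [N16.lo, N16.hi] <;> linarith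
  have hfar : ∀ i j : Fin 3, i ≠ 0 → j ≠ 0 → ¬ Interleaved k ε
      (intervalModule k (B16.I i) (B16.conv i)) (intervalModule k (N16.I j) (N16.conv j)) := by
    intro i j hi hj
    fin_cases i <;> fin_cases j <;> simp at hi hj
    · exact not_interleaved_box (hwideB 1) 0 (Or.inl (by simp [B16.hi, N16.hi]; linarith))
        _ _ (B16.I_eq_box 1) (N16.I_eq_box 1)
    · exact not_interleaved_box (hwideB 1) 1 (Or.inr (by simp [B16.lo, N16.lo]; linarith))
        _ _ (B16.I_eq_box 1) (N16.I_eq_box 2)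
    · exact fun h => not_interleaved_box (hwideN 1) 1
        (Or.inl (by simp [B16.hi, N16.hi]; linarith)) _ _ (N16.I_eq_box 1) (B16.I_eq_box 2) h.symm
    · exact fun h => not_interleaved_box (hwideN 2) 0
        (Or.inr (by simp [B16.lo, N16.lo]; linarith)) _ _ (N16.I_eq_box 2) (B16.I_eq_box 2) h.symm
  obtain ⟨σ, hσ, hint⟩ : ∃ σ : Fin 3 → Fin 3, σ.Injective ∧ ∀ i, Interleaved k ε
      (intervalModule k (B16.I i) (B16.conv i)) (intervalModule k (N16.I (σ i)) (N16.conv (σ i))) :=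
    h.exists_injective fun (i : Fin 3) => by
      rw [B16.I_eq_box]
      exact not_setTrivial_box (by linarith) (hwideB i)
  have hσ₀ : ∀ i, i ≠ 0 → σ i = 0 := fun i hi => by_contra fun hσi => hfar i (σ i) hi hσi (hint i)
  exact absurd (hσ ((hσ₀ 1 (by decide)).trans (hσ₀ 2 (by decide)).symm)) (by decide)

theorem B16_N16_matched_three : Matched k 3 B16 N16 := by
  refine matched_of_equiv (by norm_num) (Equiv.refl (Fin 3)) fun (i : Fin 3) =>
    interleaved_box (by norm_num) ?_ ?_ _ _ (B16.I_eq_box i) (N16.I_eq_box i) <;>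
  · intro l
    fin_cases i <;> fin_cases l <;> norm_num [B16.lo, B16.hi, N16.lo, N16.hi]

end Example

/-- **Example 4.2.** The rectangle decomposable `ℝ²`-modules with barcodes
`B(M) = {(0,10)×(1,11), (0,12)×(−1,11), (2,10)×(1,9)}` and
`B(N) = {(1,11)×(0,10), (1,9)×(0,12), (−1,11)×(2,10)}` are `1`-interleaved, admit no
`ε`-matching for `ε < 3`, and satisfy `d_I(M,N) = 1`, `d_B(M,N) = 3`; hence the bound
`d_B ≤ (2n−1)·d_I` for rectangle decomposable `ℝⁿ`-modules is tight for `n = 2`. -/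
theorem example_dB_eq_three_dI (k : Type) [Field k] :
    B16.pfd k ∧ N16.pfd k ∧ IsRectBarcode B16 ∧ IsRectBarcode N16 ∧
    Interleaved k 1 (B16.module k) (N16.module k) ∧
    (∀ ε : ℝ, ε < 3 → ¬ Matched k ε B16 N16) ∧
    dInt k (B16.module k) (N16.module k) = 1 ∧
    dBot k B16 N16 = 3 := by
  refine ⟨B16.pfd_of_finite, N16.pfd_of_finite, B16.isRectBarcode, N16.isRectBarcode,
    B16_N16_interleaved_one, fun ε hε => B16_N16_not_matched hε, ?_, ?_⟩
  · exact (iInf_ofReal_eq_of_isLeast ⟨B16_N16_interleaved_one,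
      fun ε hε => not_lt.1 fun h => B16_N16_not_interleaved h hε⟩).trans ENNReal.ofReal_one
  · exact (iInf_ofReal_eq_of_isLeast ⟨B16_N16_matched_three,
      fun ε hε => not_lt.1 fun h => B16_N16_not_matched h hε⟩).trans (ENNReal.ofReal_ofNat 3)
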